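/- Let c ∈ {−1, 1}, let D ⊆ ℝ² be open, and let φ : D → ℝ be smooth with 1 + cφ(u,v)² ≠ 0 for all (u,v) ∈ D, satisfying φ_uv − (2cφ/(1 + cφ²)) φ_u φ_v = 0 on D. Then every point of D has an open rectangular neighborhood I × J ⊆ D on which there exist smooth functions f : I → ℝ and g : J → ℝ such that either φ(u,v) = (f(u) + g(v))/(1 − c f(u) g(v)) for all (u,v) ∈ I × J, or φ(u,v) = (1 − c f(u) g(v))/(f(u) + g(v)) for all (u,v) ∈ I × J. -/

import Mathlib

noncomputable section

/-- Partial derivative in the first variable. -/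
def pd1 (f : ℝ → ℝ → ℝ) (u v : ℝ) : ℝ := deriv (fun x => f x v) u

/-- Partial derivative in the second variable. -/
def pd2 (f : ℝ → ℝ → ℝ) (u v : ℝ) : ℝ := deriv (fun y => f u y) v

/-- Smoothness of a two-variable function on a set. -/
def Smooth2 (f : ℝ → ℝ → ℝ) (s : Set (ℝ × ℝ)) : Prop :=
  ContDiffOn ℝ (⊤ : ℕ∞) (fun p : ℝ × ℝ => f p.1 p.2) s

/-!
Write `φ = tan θ` for `c = 1` and `φ = tanh θ` for `c = -1`, so that `θ_u = φ_u / (1 + cφ²)`.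
The equation says that `θ_u` does not depend on `v`, hence
`θ(u, v) - (θ(u, v₀) - θ(u₀, v₀)) = θ(u₀, v)`, and the addition law of `tan` / `tanh` turns this
into `φ = (f + g) / (1 - cfg)` with `f = tanSub c (φ(·, v₀)) (φ(u₀, v₀))` and `g = φ(u₀, ·)`.
The angle `θ` itself is never needed: it suffices that `tanSub` subtracts the quantities
`p' / (1 + cp²)` (`HasDerivAt.tanSub`).
-/

/-- The subtraction law of `tan` (`c = 1`) and of `tanh` (`c = -1`). -/
def tanSub (c a b : ℝ) : ℝ := (a - b) / (1 + c * a * b)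

section TanSub

variable {c a b : ℝ}

theorem tanSub_zero_right (c a : ℝ) : tanSub c a 0 = a := by
  simp [tanSub]

theorem tanSub_self (c a : ℝ) : tanSub c a a = 0 := by
  simp [tanSub]

theorem one_add_mul_tanSub_sq (hab : 1 + c * a * b ≠ 0) :
    1 + c * tanSub c a b ^ 2 = (1 + c * a ^ 2) * (1 + c * b ^ 2) / (1 + c * a * b) ^ 2 := by
  unfold tanSub
  field_simp
  ring

theorem eq_tanAdd_of_tanSub_eq {r : ℝ} (hab : 1 + c * a * b ≠ 0) (hb : 1 + c * b ^ 2 ≠ 0)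
    (hr : tanSub c a b = r) : 1 - c * b * r ≠ 0 ∧ a = (b + r) / (1 - c * b * r) := by
  have hr' : a - b = r * (1 + c * a * b) := (div_eq_iff hab).1 hr
  have hden : (1 - c * b * r) * (1 + c * a * b) = 1 + c * b ^ 2 := by
    linear_combination (c * b) * hr'
  have hden0 : 1 - c * b * r ≠ 0 := left_ne_zero_of_mul (hden ▸ hb)
  exact ⟨hden0, (eq_div_iff hden0).2 (by linear_combination hr')⟩

theorem HasDerivAt.tanSub {p q : ℝ → ℝ} {p' q' x : ℝ} (hp : HasDerivAt p p' x)
    (hq : HasDerivAt q q' x) (hpq : 1 + c * p x * q x ≠ 0) (hp0 : 1 + c * p x ^ 2 ≠ 0)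
    (hq0 : 1 + c * q x ^ 2 ≠ 0) :
    HasDerivAt (fun y => tanSub c (p y) (q y))
      ((1 + c * tanSub c (p x) (q x) ^ 2) * (p' / (1 + c * p x ^ 2) - q' / (1 + c * q x ^ 2)))
      x := by
  refine ((hp.sub hq).fun_div (((hp.const_mul c).fun_mul hq).const_add 1) hpq).congr_deriv ?_
  rw [one_add_mul_tanSub_sq hpq, Pi.sub_apply]
  field_simp
  ring

theorem ContDiffOn.tanSub {n : WithTop ℕ∞} {p q : ℝ → ℝ} {s : Set ℝ} (hp : ContDiffOn ℝ n p s)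
    (hq : ContDiffOn ℝ n q s) (hpq : ∀ x ∈ s, 1 + c * p x * q x ≠ 0) :
    ContDiffOn ℝ n (fun x => tanSub c (p x) (q x)) s :=
  (hp.sub hq).div (contDiffOn_const.add ((contDiffOn_const.mul hp).mul hq)) hpq

end TanSub

theorem eq_of_hasDerivAt_zero {𝕜 G : Type*} [RCLike 𝕜] [NormedAddCommGroup G] [NormedSpace 𝕜 G]
    {s : Set 𝕜} (hs : IsOpen s) (hs' : IsPreconnected s) {h : 𝕜 → G}
    (hd : ∀ x ∈ s, HasDerivAt h 0 x) {x y : 𝕜} (hx : x ∈ s) (hy : y ∈ s) : h x = h y :=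
  hs.is_const_of_deriv_eq_zero hs' (fun z hz => (hd z hz).differentiableAt.differentiableWithinAt)
    (fun z hz => (hd z hz).deriv) hx hy

namespace Smooth2

variable {φ : ℝ → ℝ → ℝ} {D : Set (ℝ × ℝ)} {u v : ℝ}

theorem hasDerivAt_pd1 (hφ : Smooth2 φ D) (hD : IsOpen D) (h : (u, v) ∈ D) :
    HasDerivAt (fun x => φ x v) (pd1 φ u v) u :=
  DifferentiableAt.hasDerivAt <| ((hφ.contDiffAt (hD.mem_nhds h)).differentiableAt (by simp)).comp
    (f := fun x => (x, v)) u (differentiableAt_id.prodMk (differentiableAt_const v))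

theorem hasDerivAt_pd2 (hφ : Smooth2 φ D) (hD : IsOpen D) (h : (u, v) ∈ D) :
    HasDerivAt (fun y => φ u y) (pd2 φ u v) v :=
  DifferentiableAt.hasDerivAt <| ((hφ.contDiffAt (hD.mem_nhds h)).differentiableAt (by simp)).comp
    (f := fun y => (u, y)) v ((differentiableAt_const u).prodMk differentiableAt_id)

theorem continuousAt (hφ : Smooth2 φ D) (hD : IsOpen D) (h : (u, v) ∈ D) :
    ContinuousAt (fun p : ℝ × ℝ => φ p.1 p.2) (u, v) :=
  (hφ.contDiffAt (hD.mem_nhds h)).continuousAt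

theorem contDiffOn_slice_fst (hφ : Smooth2 φ D) {I : Set ℝ} (hI : ∀ u ∈ I, (u, v) ∈ D) :
    ContDiffOn ℝ (⊤ : ℕ∞) (fun u => φ u v) I :=
  hφ.comp (contDiff_id.prodMk contDiff_const).contDiffOn hI

theorem contDiffOn_slice_snd (hφ : Smooth2 φ D) {J : Set ℝ} (hJ : ∀ v ∈ J, (u, v) ∈ D) :
    ContDiffOn ℝ (⊤ : ℕ∞) (fun v => φ u v) J :=
  hφ.comp (contDiff_const.prodMk contDiff_id).contDiffOn hJ

end Smooth2

theorem Smooth2.smooth2_pd1 {φ : ℝ → ℝ → ℝ} {D : Set (ℝ × ℝ)} (hφ : Smooth2 φ D)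
    (hD : IsOpen D) : Smooth2 (pd1 φ) D := by
  refine ((hφ.fderiv_of_isOpen hD (by simp)).clm_apply
    (contDiffOn_const (c := ((1 : ℝ), (0 : ℝ))))).congr ?_
  rintro ⟨u, v⟩ h
  exact ((hφ.contDiffAt (hD.mem_nhds h)).differentiableAt (by simp)).hasFDerivAt.comp_hasDerivAt u
    ((hasDerivAt_id u).prodMk (hasDerivAt_const u v)) |>.deriv

theorem Smooth2.hasDerivAt_pd1_div_eq_zero {c : ℝ} {φ : ℝ → ℝ → ℝ} {D : Set (ℝ × ℝ)}
    (hφ : Smooth2 φ D) (hD : IsOpen D) {u v : ℝ} (h : (u, v) ∈ D)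
    (hne : 1 + c * φ u v ^ 2 ≠ 0)
    (heq : pd2 (pd1 φ) u v - (2 * c * φ u v / (1 + c * φ u v ^ 2)) * pd1 φ u v * pd2 φ u v = 0) :
    HasDerivAt (fun y => pd1 φ u y / (1 + c * φ u y ^ 2)) 0 v := by
  refine (((hφ.smooth2_pd1 hD).hasDerivAt_pd2 hD h).fun_div
    ((((hφ.hasDerivAt_pd2 hD h).fun_pow 2).const_mul c).const_add 1) hne).congr_deriv ?_
  refine div_eq_zero_iff.2 (Or.inl ?_)
  field_simp at heq
  linear_combination heq

theorem tanSub_tanSub_eq_of_harmonic {c : ℝ} {φ : ℝ → ℝ → ℝ} {D : Set (ℝ × ℝ)}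
    (hφ : Smooth2 φ D) (hD : IsOpen D) (hne : ∀ u v, (u, v) ∈ D → 1 + c * φ u v ^ 2 ≠ 0)
    (heq : ∀ u v, (u, v) ∈ D →
      pd2 (pd1 φ) u v - (2 * c * φ u v / (1 + c * φ u v ^ 2)) * pd1 φ u v * pd2 φ u v = 0)
    {I J : Set ℝ} (hI : IsOpen I) (hI' : IsPreconnected I) (hJ : IsOpen J)
    (hJ' : IsPreconnected J) (hIJ : I ×ˢ J ⊆ D) {u₀ v₀ : ℝ} (hu₀ : u₀ ∈ I) (hv₀ : v₀ ∈ J)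
    (hf : ∀ u ∈ I, 1 + c * φ u v₀ * φ u₀ v₀ ≠ 0)
    (hf0 : ∀ u ∈ I, 1 + c * tanSub c (φ u v₀) (φ u₀ v₀) ^ 2 ≠ 0)
    (hφf : ∀ u ∈ I, ∀ v ∈ J, 1 + c * φ u v * tanSub c (φ u v₀) (φ u₀ v₀) ≠ 0)
    {u v : ℝ} (hu : u ∈ I) (hv : v ∈ J) :
    tanSub c (φ u v) (tanSub c (φ u v₀) (φ u₀ v₀)) = φ u₀ v := by
  set f := fun x => tanSub c (φ x v₀) (φ u₀ v₀)
  have hmem : ∀ x ∈ I, ∀ y ∈ J, (x, y) ∈ D := fun x hx y hy => hIJ ⟨hx, hy⟩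
  have hw : ∀ x ∈ I,
      pd1 φ x v / (1 + c * φ x v ^ 2) = pd1 φ x v₀ / (1 + c * φ x v₀ ^ 2) := fun x hx =>
    eq_of_hasDerivAt_zero hJ hJ' (fun y hy => hφ.hasDerivAt_pd1_div_eq_zero hD (hmem x hx y hy)
      (hne _ _ (hmem x hx y hy)) (heq _ _ (hmem x hx y hy))) hv hv₀
  have hf' : ∀ x ∈ I,
      HasDerivAt f ((1 + c * f x ^ 2) * (pd1 φ x v₀ / (1 + c * φ x v₀ ^ 2))) x := fun x hx => by
    simpa using (hφ.hasDerivAt_pd1 hD (hmem x hx v₀ hv₀)).tanSub (hasDerivAt_const x (φ u₀ v₀))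
      (hf x hx) (hne _ _ (hmem x hx v₀ hv₀)) (hne _ _ (hmem u₀ hu₀ v₀ hv₀))
  have hΨ : ∀ x ∈ I, HasDerivAt (fun x => tanSub c (φ x v) (f x)) 0 x := fun x hx => by
    refine ((hφ.hasDerivAt_pd1 hD (hmem x hx v hv)).tanSub (hf' x hx) (hφf x hx v hv)
      (hne _ _ (hmem x hx v hv)) (hf0 x hx)).congr_deriv ?_
    rw [mul_div_cancel_left₀ _ (hf0 x hx), hw x hx, sub_self, mul_zero]
  calc tanSub c (φ u v) (f u) = tanSub c (φ u₀ v) (f u₀) := eq_of_hasDerivAt_zero hI hI' hΨ hu hu₀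
    _ = φ u₀ v := by rw [show f u₀ = 0 from tanSub_self c _, tanSub_zero_right]

open Topology in
theorem Smooth2.eventually_tanSub_denominators_ne_zero {c : ℝ} {φ : ℝ → ℝ → ℝ}
    {D : Set (ℝ × ℝ)} (hφ : Smooth2 φ D) (hD : IsOpen D) {u₀ v₀ : ℝ} (hp : (u₀, v₀) ∈ D)
    (hne : 1 + c * φ u₀ v₀ ^ 2 ≠ 0) :
    ∀ᶠ q : ℝ × ℝ in 𝓝 (u₀, v₀), q ∈ D ∧ 1 + c * φ q.1 v₀ * φ u₀ v₀ ≠ 0 ∧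
      1 + c * tanSub c (φ q.1 v₀) (φ u₀ v₀) ^ 2 ≠ 0 ∧
      1 + c * φ q.1 q.2 * tanSub c (φ q.1 v₀) (φ u₀ v₀) ≠ 0 := by
  set f := fun u => tanSub c (φ u v₀) (φ u₀ v₀)
  have hk : 1 + c * φ u₀ v₀ * φ u₀ v₀ ≠ 0 := by simpa [sq, mul_assoc] using hne
  have hφc : ContinuousAt (fun x => φ x v₀) u₀ := (hφ.hasDerivAt_pd1 hD hp).continuousAt
  have hφc₂ : ContinuousAt (fun q : ℝ × ℝ => φ q.1 q.2) (u₀, v₀) := hφ.continuousAt hD hp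
  have hfc : ContinuousAt f u₀ :=
    (hφc.sub continuousAt_const).div (continuousAt_const.add (continuousAt_const.mul hφc |>.mul
      continuousAt_const)) hk
  have hf₀ : f u₀ = 0 := tanSub_self c _
  refine Filter.Eventually.and (hD.mem_nhds hp) <| .and ?_ <| .and ?_ ?_
  · exact ContinuousAt.eventually_ne (g := fun q : ℝ × ℝ => 1 + c * φ q.1 v₀ * φ u₀ v₀)
      (by fun_prop) hk
  · exact ContinuousAt.eventually_ne (g := fun q : ℝ × ℝ => 1 + c * f q.1 ^ 2)
      (by fun_prop) (by simp [hf₀])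
  · exact ContinuousAt.eventually_ne (g := fun q : ℝ × ℝ => 1 + c * φ q.1 q.2 * f q.1)
      (by fun_prop) (by simp [hf₀])

open Metric in
theorem statement15_general
    (c : ℝ)
    (D : Set (ℝ × ℝ)) (hDopen : IsOpen D)
    (φ : ℝ → ℝ → ℝ) (hφ : Smooth2 φ D)
    (hne : ∀ u v, (u, v) ∈ D → 1 + c * (φ u v) ^ 2 ≠ 0)
    (heq : ∀ u v, (u, v) ∈ D →
      pd2 (pd1 φ) u v
        - (2 * c * φ u v / (1 + c * (φ u v) ^ 2)) * pd1 φ u v * pd2 φ u v = 0) :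
    ∀ p ∈ D, ∃ I J : Set ℝ, IsOpen I ∧ IsOpen J ∧ p.1 ∈ I ∧ p.2 ∈ J ∧ I ×ˢ J ⊆ D ∧
      ∃ f g : ℝ → ℝ, ContDiffOn ℝ (⊤ : ℕ∞) f I ∧ ContDiffOn ℝ (⊤ : ℕ∞) g J ∧
        ((∀ u ∈ I, ∀ v ∈ J, 1 - c * f u * g v ≠ 0 ∧
            φ u v = (f u + g v) / (1 - c * f u * g v)) ∨
         (∀ u ∈ I, ∀ v ∈ J, f u + g v ≠ 0 ∧
            φ u v = (1 - c * f u * g v) / (f u + g v))) := by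
  rintro ⟨u₀, v₀⟩ hp
  obtain ⟨ε, hε, hball⟩ := Metric.mem_nhds_iff.1
    (hφ.eventually_tanSub_denominators_ne_zero hDopen hp (hne u₀ v₀ hp))
  rw [← ball_prod_same] at hball
  have hu₀ : u₀ ∈ ball u₀ ε := mem_ball_self hε
  have hv₀ : v₀ ∈ ball v₀ ε := mem_ball_self hε
  have hrect := fun u (hu : u ∈ ball u₀ ε) v (hv : v ∈ ball v₀ ε) => hball (Set.mk_mem_prod hu hv)
  refine ⟨ball u₀ ε, ball v₀ ε, isOpen_ball, isOpen_ball, hu₀, hv₀, fun q hq => (hball hq).1,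
    fun u => tanSub c (φ u v₀) (φ u₀ v₀), fun v => φ u₀ v, ?_, ?_, Or.inl fun u hu v hv => ?_⟩
  · exact (hφ.contDiffOn_slice_fst fun u hu => (hrect u hu v₀ hv₀).1).tanSub contDiffOn_const
      fun u hu => (hrect u hu v₀ hv₀).2.1
  · exact hφ.contDiffOn_slice_snd fun v hv => (hrect u₀ hu₀ v hv).1
  · exact eq_tanAdd_of_tanSub_eq (hrect u hu v hv).2.2.2 (hrect u hu v hv).2.2.1 <|
      tanSub_tanSub_eq_of_harmonic hφ hDopen hne heq isOpen_ball
        (convex_ball u₀ ε).isPreconnected isOpen_ball (convex_ball v₀ ε).isPreconnected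
        (fun q hq => (hball hq).1) hu₀ hv₀ (fun u hu => (hrect u hu v₀ hv₀).2.1)
        (fun u hu => (hrect u hu v₀ hv₀).2.2.1) (fun u hu v hv => (hrect u hu v hv).2.2.2) hu hv

/-- Proposition 6.2, nonlinear d'Alembert formula: for `c = ±1`,
every smooth solution of the harmonic map equation
`φ_uv − (2cφ/(1 + cφ²))φ_uφ_v = 0` is locally of the form `(f + g)/(1 − cfg)` or
`(1 − cfg)/(f + g)` with `f` Lorentz holomorphic and `g` Lorentz anti-holomorphic. -/
theorem statement15
    (c : ℝ) (hc : c = -1 ∨ c = 1)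
    (D : Set (ℝ × ℝ)) (hDopen : IsOpen D)
    (φ : ℝ → ℝ → ℝ) (hφ : Smooth2 φ D)
    (hne : ∀ u v, (u, v) ∈ D → 1 + c * (φ u v) ^ 2 ≠ 0)
    (heq : ∀ u v, (u, v) ∈ D →
      pd2 (pd1 φ) u v
        - (2 * c * φ u v / (1 + c * (φ u v) ^ 2)) * pd1 φ u v * pd2 φ u v = 0) :
    ∀ p ∈ D, ∃ I J : Set ℝ, IsOpen I ∧ IsOpen J ∧ p.1 ∈ I ∧ p.2 ∈ J ∧ I ×ˢ J ⊆ D ∧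
      ∃ f g : ℝ → ℝ, ContDiffOn ℝ (⊤ : ℕ∞) f I ∧ ContDiffOn ℝ (⊤ : ℕ∞) g J ∧
        ((∀ u ∈ I, ∀ v ∈ J, 1 - c * f u * g v ≠ 0 ∧
            φ u v = (f u + g v) / (1 - c * f u * g v)) ∨
         (∀ u ∈ I, ∀ v ∈ J, f u + g v ≠ 0 ∧
            φ u v = (1 - c * f u * g v) / (f u + g v))) :=
  statement15_general c D hDopen φ hφ hne heq
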